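/- arXiv:1810.10360 — 4 statements merged into one kernel-verified Lean document; each statement's English description precedes it below -/
import Mathlib

section
/- Let Cut be a type (the consistent cuts of runs of an asynchronous system), let n : ℕ, index processes by i ∈ Fin n, and for each i let ∼ᵢ be an equivalence relation on Cut. For φ : Cut → Prop define (Kᵢ φ) c := ∀ c', c' ∼ᵢ c → φ c' and (Pᵢ φ) c := ∃ c', c' ∼ᵢ c ∧ φ c'. Define 'majority concurrently knows' by (M^C φ) c := ∃ S : Finset (Fin n), 3 · S.card > 2 · n ∧ ∀ i ∈ S, (Kᵢ (Pᵢ φ)) c. Suppose φ is local to more than two-thirds of the processes: there is L : Finset (Fin n) with 3 · L.card > 2 · n such that for every i ∈ L and every cut c, φ c implies (Kᵢ φ) c. Then for every cut c, (M^C φ) c implies φ c. -/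
/-- `i` knows `φ`: `φ` holds in every cut equivalent (w.r.t. `i`) to the
current cut.  `sim` is the cut-equivalence relation of a fixed process. -/
def Knows {Cut : Type*} (sim : Cut → Cut → Prop) (φ : Cut → Prop) (c : Cut) : Prop :=
  ∀ c', sim c' c → φ c'

/-- `i` partially knows `φ`: `φ` holds in some cut equivalent (w.r.t. `i`) to
the current cut. -/
def PKnows {Cut : Type*} (sim : Cut → Cut → Prop) (φ : Cut → Prop) (c : Cut) : Prop :=
  ∃ c', sim c' c ∧ φ c'

/-- Majority concurrently knows: some set `S` of more than `2n/3` of the `n`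
processes satisfies `K_i (P_i φ)` for all `i ∈ S`. -/
def MajorityCK {Cut : Type*} (n : ℕ) (sim : Fin n → Cut → Cut → Prop)
    (φ : Cut → Prop) (c : Cut) : Prop :=
  ∃ S : Finset (Fin n), 3 * S.card > 2 * n ∧
    ∀ i ∈ S, Knows (sim i) (PKnows (sim i) φ) c

/-- If `φ` is local to more than two-thirds of the processes, then
"majority concurrently knows `φ`" implies `φ`. -/
theorem majorityCK_implies_of_local {Cut : Type*} (n : ℕ)
    (sim : Fin n → Cut → Cut → Prop) (hsim : ∀ i, Equivalence (sim i))
    (φ : Cut → Prop)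
    (hlocal : ∃ L : Finset (Fin n), 3 * L.card > 2 * n ∧
      ∀ i ∈ L, ∀ c, φ c → Knows (sim i) φ c) :
    ∀ c, MajorityCK n sim φ c → φ c := by
  obtain ⟨L, hL, hloc⟩ := hlocal
  rintro c ⟨S, hS, hK⟩
  -- S ∩ L nonempty
  have hcard : S.card + L.card > n := by
    have := Finset.card_le_univ (S ∪ L)
    simp only [Finset.card_univ, Fintype.card_fin] at this
    omega
  have hne : (S ∩ L).Nonempty := by
    rw [← Finset.card_pos]
    have := Finset.card_union_add_card_inter S L
    have h2 : (S ∪ L).card ≤ n := by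
      have := Finset.card_le_univ (S ∪ L)
      simpa using this
    omega
  obtain ⟨i, hi⟩ := hne
  have hiS := Finset.mem_inter.mp hi |>.1
  have hiL := Finset.mem_inter.mp hi |>.2
  obtain ⟨c', hc', hφ⟩ := hK i hiS c ((hsim i).refl c)
  exact hloc i hiL c' hφ c ((hsim i).symm hc')
end

section
/- Let Cut be a type, let n : ℕ, index processes by i ∈ Fin n, and for each i let ∼ᵢ be an equivalence relation on Cut. For φ : Cut → Prop define (Kᵢ φ) c := ∀ c', c' ∼ᵢ c → φ c', (Pᵢ φ) c := ∃ c', c' ∼ᵢ c ∧ φ c', and (M^C φ) c := ∃ S : Finset (Fin n), 3 · S.card > 2 · n ∧ ∀ i ∈ S, (Kᵢ (Pᵢ φ)) c. Suppose φ is local to more than two-thirds of the processes: there is L : Finset (Fin n) with 3 · L.card > 2 · n such that for every i ∈ L and every cut c, φ c implies (Kᵢ φ) c. Then for every predicate X : Cut → Prop satisfying X c → (M^C (fun c' => φ c' ∧ X c')) c for all c (in particular for X = C^C φ, the greatest fixed point of this map), and for every cut c, X c implies φ c. -/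
/-- If `φ` is local to more than two-thirds of the processes, then any
post-fixed point `X` of `X ↦ M^C(φ ∧ X)` — in particular the greatest fixed
point `C^C φ` — implies `φ`. -/
theorem cck_implies_of_local {Cut : Type*} (n : ℕ)
    (sim : Fin n → Cut → Cut → Prop) (hsim : ∀ i, Equivalence (sim i))
    (φ : Cut → Prop)
    (hlocal : ∃ L : Finset (Fin n), 3 * L.card > 2 * n ∧
      ∀ i ∈ L, ∀ c, φ c → Knows (sim i) φ c) :
    ∀ X : Cut → Prop,
      (∀ c, X c → MajorityCK n sim (fun c' => φ c' ∧ X c') c) →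
      ∀ c, X c → φ c := by
  obtain ⟨L, hL, hLloc⟩ := hlocal
  intro X hX c hc
  obtain ⟨S, hS, hK⟩ := hX c hc
  have hinter : (L ∩ S).Nonempty := by
    rw [Finset.nonempty_iff_ne_empty]
    intro hempty
    have hdisj : Disjoint L S := Finset.disjoint_iff_inter_eq_empty.mpr hempty
    have := Finset.card_union_of_disjoint hdisj ▸ Finset.card_le_card
      (Finset.subset_univ (L ∪ S))
    simp [Finset.card_univ] at this
    omega
  obtain ⟨i, hi⟩ := hinter
  obtain ⟨hiL, hiS⟩ := Finset.mem_inter.mp hi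
  obtain ⟨c'', hsim'', hφ'', _⟩ := hK i hiS c ((hsim i).refl c)
  exact hLloc i hiL c'' hφ'' c ((hsim i).symm hsim'')
end

section
/- Fix n : ℕ (the number of participant nodes) and a type V of event blocks. For a relation E : V → V → Prop (the reference relation), say u is an ancestor of v if (v, u) lies in the reflexive-transitive closure of E, and a strict ancestor if (v, u) lies in the transitive closure of E; v is a leaf if ∀ u, ¬ E v u. Define the root sets of E by recursion on the frame number: roots E 0 is the set of leaves, and roots E (k+1) is the set of events v such that v ∉ roots E j for all j ≤ k and 3 · Set.ncard {u | u ∈ roots E k ∧ u is a strict E-ancestor of v} > 2 · n. Let E₁, E₂ : V → V → Prop and let v ∈ V be such that the set A of E₁-ancestors of v equals the set of E₂-ancestors of v, and for all x, y ∈ A, E₁ x y ↔ E₂ x y. Then for every frame number j, v ∈ roots E₁ j if and only if v ∈ roots E₂ j. -/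
/-- The root set of frame `j` for the reference relation `E`, given `n`
participant nodes.  Frame `0` consists of the leaves; an event is a root of
frame `k+1` if it is in no earlier root set and strictly reaches more than
`2n/3` roots of frame `k`. -/
def rootSet {V : Type*} (n : ℕ) (E : V → V → Prop) : ℕ → Set V
  | 0 => {v | ∀ u, ¬ E v u}
  | k + 1 => {v | (∀ j ≤ k, v ∉ rootSet n E j) ∧
      3 * Set.ncard {u | u ∈ rootSet n E k ∧ Relation.TransGen E v u} > 2 * n}

/-- Consistent chains are root consistent: if the two reference relations
`E₁, E₂` give `v` the same set of ancestors `A` and agree on `A`, then `v` is a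
root of the `j`-th frame for `E₁` iff it is a root of the `j`-th frame for
`E₂`. -/
theorem consistent_root {V : Type*} (n : ℕ) (E₁ E₂ : V → V → Prop) (v : V)
    (hanc : {u | Relation.ReflTransGen E₁ v u} = {u | Relation.ReflTransGen E₂ v u})
    (hedge : ∀ x ∈ {u | Relation.ReflTransGen E₁ v u},
             ∀ y ∈ {u | Relation.ReflTransGen E₁ v u}, (E₁ x y ↔ E₂ x y)) :
    ∀ j : ℕ, v ∈ rootSet n E₁ j ↔ v ∈ rootSet n E₂ j := by
  set A := {u | Relation.ReflTransGen E₁ v u} with hA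
  have hvA : v ∈ A := Relation.ReflTransGen.refl
  have hmem1 : ∀ x, x ∈ A ↔ Relation.ReflTransGen E₁ v x := fun x => Iff.rfl
  have hmem2 : ∀ x, x ∈ A ↔ Relation.ReflTransGen E₂ v x := by
    intro x; rw [show x ∈ A ↔ x ∈ {u | Relation.ReflTransGen E₂ v u} from hanc ▸ Iff.rfl]; exact Iff.rfl
  have hRT1 : ∀ x ∈ A, ∀ y, Relation.ReflTransGen E₁ x y → y ∈ A := by
    intro x hx y h
    exact (hmem1 y).mpr (((hmem1 x).mp hx).trans h)
  have hRT2 : ∀ x ∈ A, ∀ y, Relation.ReflTransGen E₂ x y → y ∈ A := by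
    intro x hx y h
    exact (hmem2 y).mpr (((hmem2 x).mp hx).trans h)
  have hE : ∀ x ∈ A, ∀ y, (E₁ x y ↔ E₂ x y) := by
    intro x hx y
    constructor
    · intro h; exact (hedge x hx y (hRT1 x hx y (Relation.ReflTransGen.single h))).mp h
    · intro h; exact (hedge x hx y (hRT2 x hx y (Relation.ReflTransGen.single h))).mpr h
  have htg : ∀ w ∈ A, ∀ u, (Relation.TransGen E₁ w u ↔ Relation.TransGen E₂ w u) := by
    intro w hw u
    constructor
    · intro h
      induction h with
      | single h => exact Relation.TransGen.single ((hE w hw _).mp h)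
      | @tail b c h h' ih =>
          exact ih.tail ((hE b (hRT1 w hw b h.to_reflTransGen) c).mp h')
    · intro h
      induction h with
      | single h => exact Relation.TransGen.single ((hE w hw _).mpr h)
      | @tail b c h h' ih =>
          have hb : b ∈ A := hRT2 w hw b h.to_reflTransGen
          exact ih.tail ((hE b hb c).mpr h')
  have main : ∀ j : ℕ, ∀ w ∈ A, (w ∈ rootSet n E₁ j ↔ w ∈ rootSet n E₂ j) := by
    intro j
    induction j using Nat.strong_induction_on with
    | _ j ih =>
      intro w hw
      match j with
      | 0 =>
          simp only [rootSet, Set.mem_setOf_eq]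
          constructor
          · intro h u hu; exact h u ((hE w hw u).mpr hu)
          · intro h u hu; exact h u ((hE w hw u).mp hu)
      | k + 1 =>
          have hset : {u | u ∈ rootSet n E₁ k ∧ Relation.TransGen E₁ w u}
              = {u | u ∈ rootSet n E₂ k ∧ Relation.TransGen E₂ w u} := by
            ext u
            simp only [Set.mem_setOf_eq]
            constructor
            · rintro ⟨hu, ht⟩
              have huA : u ∈ A := hRT1 w hw u ht.to_reflTransGen
              exact ⟨(ih k (Nat.lt_succ_self k) u huA).mp hu, (htg w hw u).mp ht⟩
            · rintro ⟨hu, ht⟩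
              have ht1 : Relation.TransGen E₁ w u := (htg w hw u).mpr ht
              have huA : u ∈ A := hRT1 w hw u ht1.to_reflTransGen
              exact ⟨(ih k (Nat.lt_succ_self k) u huA).mpr hu, ht1⟩
          simp only [rootSet, Set.mem_setOf_eq, hset]
          constructor
          · rintro ⟨h1, h2⟩
            exact ⟨fun i hi => fun hc =>
              h1 i hi ((ih i (Nat.lt_succ_of_le hi) w hw).mpr hc), h2⟩
          · rintro ⟨h1, h2⟩
            exact ⟨fun i hi => fun hc =>
              h1 i hi ((ih i (Nat.lt_succ_of_le hi) w hw).mp hc), h2⟩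
  exact fun j => main j v hvA
end

section
/- Fix n : ℕ (the number of participant nodes) and a type V of event blocks. For a relation E : V → V → Prop (the reference relation), say u is an ancestor of v if (v, u) lies in the reflexive-transitive closure of E, and a strict ancestor if (v, u) lies in the transitive closure of E; v is a leaf if ∀ u, ¬ E v u. Define the root sets of E by recursion on the frame number: roots E 0 is the set of leaves, and roots E (k+1) is the set of events v such that v ∉ roots E j for all j ≤ k and 3 · Set.ncard {u | u ∈ roots E k ∧ u is a strict E-ancestor of v} > 2 · n. Let E₁, E₂ : V → V → Prop and let v ∈ V be such that the set A of E₁-ancestors of v equals the set of E₂-ancestors of v, and for all x, y ∈ A, E₁ x y ↔ E₂ x y. Then for every frame number k, the set {u ∈ A | u ∈ roots E₁ k} equals the set {u ∈ A | u ∈ roots E₂ k}. -/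
/-- Consistent flag tables: if the two reference relations `E₁, E₂` give `v`
the same set of ancestors `A` and agree on `A`, then for every frame number
`k` the roots of frame `k` among the ancestors of `v` are the same for both
relations. -/
theorem consistent_flag_table {V : Type*} (n : ℕ) (E₁ E₂ : V → V → Prop) (v : V)
    (hanc : {u | Relation.ReflTransGen E₁ v u} = {u | Relation.ReflTransGen E₂ v u})
    (hedge : ∀ x ∈ {u | Relation.ReflTransGen E₁ v u},
             ∀ y ∈ {u | Relation.ReflTransGen E₁ v u}, (E₁ x y ↔ E₂ x y)) :
    ∀ k : ℕ,
      {u | u ∈ {w | Relation.ReflTransGen E₁ v w} ∧ u ∈ rootSet n E₁ k} =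
      {u | u ∈ {w | Relation.ReflTransGen E₁ v w} ∧ u ∈ rootSet n E₂ k} := by
  have hstep1 : ∀ x ∈ {u | Relation.ReflTransGen E₁ v u}, ∀ y, E₁ x y →
      y ∈ {u | Relation.ReflTransGen E₁ v u} :=
    fun x hx y hxy => Relation.ReflTransGen.tail hx hxy
  have hstep2 : ∀ x ∈ {u | Relation.ReflTransGen E₁ v u}, ∀ y, E₂ x y →
      y ∈ {u | Relation.ReflTransGen E₁ v u} := by
    intro x hx y hxy
    rw [hanc] at hx ⊢
    exact Relation.ReflTransGen.tail hx hxy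
  have hiff : ∀ x ∈ {u | Relation.ReflTransGen E₁ v u}, ∀ y, (E₁ x y ↔ E₂ x y) := by
    intro x hx y
    constructor
    · intro h; exact (hedge x hx y (hstep1 x hx y h)).1 h
    · intro h; exact (hedge x hx y (hstep2 x hx y h)).2 h
  have htg1 : ∀ x ∈ {u | Relation.ReflTransGen E₁ v u}, ∀ y, Relation.TransGen E₁ x y →
      Relation.TransGen E₂ x y ∧ y ∈ {u | Relation.ReflTransGen E₁ v u} := by
    intro x hx y h
    induction h with
    | single h => exact ⟨Relation.TransGen.single ((hiff x hx _).1 h), hstep1 x hx _ h⟩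
    | tail _ h₂ ih =>
      obtain ⟨t, hm⟩ := ih
      exact ⟨t.tail ((hiff _ hm _).1 h₂), hstep1 _ hm _ h₂⟩
  have htg2 : ∀ x ∈ {u | Relation.ReflTransGen E₁ v u}, ∀ y, Relation.TransGen E₂ x y →
      Relation.TransGen E₁ x y ∧ y ∈ {u | Relation.ReflTransGen E₁ v u} := by
    intro x hx y h
    induction h with
    | single h => exact ⟨Relation.TransGen.single ((hiff x hx _).2 h), hstep2 x hx _ h⟩
    | tail _ h₂ ih =>
      obtain ⟨t, hm⟩ := ih
      exact ⟨t.tail ((hiff _ hm _).2 h₂), hstep2 _ hm _ h₂⟩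
  have key : ∀ k : ℕ, ∀ u ∈ {u | Relation.ReflTransGen E₁ v u},
      (u ∈ rootSet n E₁ k ↔ u ∈ rootSet n E₂ k) := by
    intro k
    induction k using Nat.strong_induction_on with
    | _ k ih =>
      intro u hu
      match k with
      | 0 =>
        simp only [rootSet, Set.mem_setOf_eq]
        constructor
        · intro h y hy; exact h y ((hiff u hu y).2 hy)
        · intro h y hy; exact h y ((hiff u hu y).1 hy)
      | k + 1 =>
        have hset : {u' | u' ∈ rootSet n E₁ k ∧ Relation.TransGen E₁ u u'} =
            {u' | u' ∈ rootSet n E₂ k ∧ Relation.TransGen E₂ u u'} := by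
          ext y
          simp only [Set.mem_setOf_eq]
          constructor
          · rintro ⟨hr, ht⟩
            obtain ⟨ht', hy⟩ := htg1 u hu y ht
            exact ⟨(ih k (Nat.lt_succ_self k) y hy).1 hr, ht'⟩
          · rintro ⟨hr, ht⟩
            obtain ⟨ht', hy⟩ := htg2 u hu y ht
            exact ⟨(ih k (Nat.lt_succ_self k) y hy).2 hr, ht'⟩
        simp only [rootSet, Set.mem_setOf_eq]
        constructor
        · rintro ⟨h1, h2⟩
          refine ⟨fun j hj hmem => h1 j hj ((ih j (Nat.lt_succ_of_le hj) u hu).2 hmem), ?_⟩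
          rwa [← hset]
        · rintro ⟨h1, h2⟩
          refine ⟨fun j hj hmem => h1 j hj ((ih j (Nat.lt_succ_of_le hj) u hu).1 hmem), ?_⟩
          rwa [hset]
  intro k
  ext u
  simp only [Set.mem_setOf_eq]
  exact and_congr_right fun hu => key k u hu
end
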